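/- For a finite-dimensional complex vector space V, d ≥ 1, and φ ∈ Sym^d V, the subspace M(φ) = A(φ)^⊥ satisfies the universal property: for every subspace W ⊆ V, φ ∈ Sym^d W if and only if M(φ) ⊆ W. Moreover, M(φ) is the unique subspace of V with this property. -/

import Mathlib

open MvPolynomial

/-- The contraction action `ℓ ∘ φ = Σ_i ℓ_i ∂φ/∂X_i` of a linear form `ℓ ∈ V*` on `Sym V`. -/
noncomputable def contractL (n : ℕ) (ℓ : Fin (n + 1) → ℂ) :
    MvPolynomial (Fin (n + 1)) ℂ →ₗ[ℂ] MvPolynomial (Fin (n + 1)) ℂ :=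
  ∑ i, ℓ i • (pderiv i).toLinearMap

/-- Membership in `Sym^d W` for a subspace `W ⊆ V` of linear forms. -/
def symPowMem (n d : ℕ) (W : Submodule ℂ (MvPolynomial (Fin (n + 1)) ℂ))
    (φ : MvPolynomial (Fin (n + 1)) ℂ) : Prop :=
  φ ∈ Algebra.adjoin ℂ (W : Set (MvPolynomial (Fin (n + 1)) ℂ)) ∧ φ.IsHomogeneous d

/-- `A(φ) = {ℓ ∈ V* : ℓ ∘ φ = 0}`. -/
def Aphi (n : ℕ) (φ : MvPolynomial (Fin (n + 1)) ℂ) : Set (Fin (n + 1) → ℂ) :=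
  {ℓ | contractL n ℓ φ = 0}

/-- `M(φ) = A(φ)^⊥ ⊆ V`: the subspace of linear forms annihilated (under contraction) by
every element of `A(φ)`. -/
noncomputable def Mphi (n : ℕ) (φ : MvPolynomial (Fin (n + 1)) ℂ) :
    Submodule ℂ (MvPolynomial (Fin (n + 1)) ℂ) :=
  homogeneousSubmodule (Fin (n + 1)) ℂ 1 ⊓
    ⨅ ℓ ∈ Aphi n φ, LinearMap.ker (contractL n ℓ)

/-!
Contraction by `ℓ ∈ V*` is the derivation `∑ ℓ_i ∂_i`. If `φ` is a polynomial in elements of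
`W`, then every `ℓ` vanishing on `W` kills `φ`, i.e. `W^⊥ ⊆ A(φ)`, so `M(φ) ⊆ W^⊥⊥ = W`.
Conversely, Euler's identity gives `d φ = ∑ x_i ∂_i φ`. Choosing an endomorphism `g` of `V*`
that kills `A(φ)` but leaves every `ℓ ∘ φ` unchanged, the sum becomes `∑ q_k ∂_k φ`, where the
linear forms `q_k` are the rows of `g` and hence lie in `M(φ)`. As `A(φ) ⊆ A(∂_k φ)`, induction
on `d` gives `φ ∈ Sym^d M(φ)`. Uniqueness is formal.
-/

namespace MvPolynomial

theorem pderiv_pderiv_comm {R σ : Type*} [CommRing R] (i j : σ) (p : MvPolynomial σ R) :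
    pderiv i (pderiv j p) = pderiv j (pderiv i p) := by
  classical
  have h : ⁅pderiv i, pderiv j⁆ = (0 : Derivation R (MvPolynomial σ R) (MvPolynomial σ R)) :=
    derivation_ext fun k => by
      rw [Derivation.commutator_apply, pderiv_X, pderiv_X]
      simp [Pi.single_apply, apply_ite]
  rw [← sub_eq_zero, ← Derivation.commutator_apply, h, Derivation.zero_apply]

end MvPolynomial

theorem LinearMap.exists_comp_eq_self_and_ker_le {K V W : Type*} [DivisionRing K]
    [AddCommGroup V] [Module K V] [AddCommGroup W] [Module K W] (D : V →ₗ[K] W) :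
    ∃ g : V →ₗ[K] V, D ∘ₗ g = D ∧ LinearMap.ker D ≤ LinearMap.ker g := by
  obtain ⟨h, hh⟩ := D.rangeRestrict.exists_rightInverse_of_surjective D.range_rangeRestrict
  refine ⟨h ∘ₗ D.rangeRestrict, LinearMap.ext fun v => ?_, fun v hv => ?_⟩
  · exact congr_arg Subtype.val (LinearMap.congr_fun hh (D.rangeRestrict v))
  · have : D.rangeRestrict v = 0 := Subtype.ext hv
    simp [this]

section Contraction

variable {n : ℕ}

local notation "𝒫" => MvPolynomial (Fin (n + 1)) ℂ

theorem contractL_apply (ℓ : Fin (n + 1) → ℂ) (p : 𝒫) :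
    contractL n ℓ p = ∑ i, ℓ i • pderiv i p := by
  simp [contractL]

theorem contractL_X (ℓ : Fin (n + 1) → ℂ) (i : Fin (n + 1)) : contractL n ℓ (X i) = C (ℓ i) := by
  classical
  simp [contractL_apply, pderiv_X, Pi.single_apply, smul_eq_C_mul]

theorem contractL_pderiv (ℓ : Fin (n + 1) → ℂ) (k : Fin (n + 1)) (p : 𝒫) :
    contractL n ℓ (pderiv k p) = pderiv k (contractL n ℓ p) := by
  simp [contractL_apply, pderiv_pderiv_comm k]

theorem contractL_eq_zero_of_mem_adjoin {ℓ : Fin (n + 1) → ℂ} {s : Set 𝒫}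
    (hs : ∀ w ∈ s, contractL n ℓ w = 0) {p : 𝒫} (hp : p ∈ Algebra.adjoin ℂ s) :
    contractL n ℓ p = 0 := by
  let D : Derivation ℂ 𝒫 𝒫 := ∑ i, ℓ i • pderiv i
  have hD : ∀ q, contractL n ℓ q = D q := fun q => by
    rw [← Derivation.coeFnAddMonoidHom_apply, map_sum, Finset.sum_apply]
    simp [contractL]
  rw [hD]
  exact Derivation.eqOn_adjoin (D2 := 0) (fun w hw => by simpa [← hD] using hs w hw) hp

theorem contractL_comp_X_of_isHomogeneous_one (f : Module.Dual ℂ 𝒫) {q : 𝒫}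
    (hq : q.IsHomogeneous 1) : contractL n (fun i => f (X i)) q = C (f q) := by
  rw [← mem_homogeneousSubmodule, homogeneousSubmodule_one_eq_span_X] at hq
  induction hq using Submodule.span_induction with
  | mem _ h => obtain ⟨i, rfl⟩ := h; exact contractL_X _ i
  | zero => simp
  | add _ _ _ _ hp hq => simp [hp, hq]
  | smul c _ _ hp => rw [map_smul, map_smul, hp, smul_eq_mul, C_mul, smul_eq_C_mul]

noncomputable def contractLFlip (φ : 𝒫) : (Fin (n + 1) → ℂ) →ₗ[ℂ] 𝒫 :=
  ∑ i, (LinearMap.proj i).smulRight (pderiv i φ)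

theorem contractLFlip_apply (φ : 𝒫) (ℓ : Fin (n + 1) → ℂ) :
    contractLFlip φ ℓ = contractL n ℓ φ := by
  simp [contractLFlip, contractL_apply]

theorem mem_Mphi {φ p : 𝒫} :
    p ∈ Mphi n φ ↔ p.IsHomogeneous 1 ∧ ∀ ℓ ∈ Aphi n φ, contractL n ℓ p = 0 := by
  simp [Mphi, Submodule.mem_iInf]

theorem Mphi_le_of_Aphi_subset {φ ψ : 𝒫} (h : Aphi n φ ⊆ Aphi n ψ) : Mphi n ψ ≤ Mphi n φ :=
  fun _ hp => mem_Mphi.2 ⟨(mem_Mphi.1 hp).1, fun ℓ hℓ => (mem_Mphi.1 hp).2 ℓ (h hℓ)⟩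

theorem Aphi_subset_Aphi_pderiv (φ : 𝒫) (k : Fin (n + 1)) : Aphi n φ ⊆ Aphi n (pderiv k φ) :=
  fun ℓ hℓ => by simp_all [Aphi, contractL_pderiv]

theorem Mphi_le_of_mem_adjoin {φ : 𝒫} {W : Submodule ℂ 𝒫}
    (hW : W ≤ homogeneousSubmodule (Fin (n + 1)) ℂ 1)
    (hφ : φ ∈ Algebra.adjoin ℂ (W : Set 𝒫)) : Mphi n φ ≤ W := by
  intro p hp
  by_contra hpW
  obtain ⟨f, hfp, hfW⟩ := W.exists_dual_map_eq_bot_of_notMem hpW inferInstance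
  have hfW' : ∀ w ∈ W, f w = 0 := fun w hw => by
    simpa [hfW] using Submodule.mem_map_of_mem (f := f) hw
  have hℓ : (fun i => f (X i)) ∈ Aphi n φ := contractL_eq_zero_of_mem_adjoin (fun w hw => by
    rw [contractL_comp_X_of_isHomogeneous_one f (hW hw), hfW' w hw, map_zero]) hφ
  have hpℓ := (mem_Mphi.1 hp).2 _ hℓ
  rw [contractL_comp_X_of_isHomogeneous_one f (mem_Mphi.1 hp).1, C_eq_zero] at hpℓ
  exact hfp hpℓ

theorem exists_sum_X_mul_pderiv_eq (φ : 𝒫) : ∃ q : Fin (n + 1) → 𝒫, (∀ k, q k ∈ Mphi n φ) ∧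
    ∑ i, X i * pderiv i φ = ∑ k, q k * pderiv k φ := by
  obtain ⟨g, hgD, hker⟩ := (contractLFlip φ).exists_comp_eq_self_and_ker_le
  set M := LinearMap.toMatrix' g
  refine ⟨fun k => ∑ i, M k i • X i, fun k => mem_Mphi.2 ⟨?_, fun ℓ hℓ => ?_⟩, ?_⟩
  · rw [← mem_homogeneousSubmodule]
    exact Submodule.sum_mem _ fun i _ => Submodule.smul_mem _ _ (isHomogeneous_X ℂ i)
  · have hgℓ : g ℓ = 0 := hker (by rwa [LinearMap.mem_ker, contractLFlip_apply])
    calc contractL n ℓ (∑ i, M k i • X i) = ∑ i, M k i • C (ℓ i) := by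
          simp only [map_sum, map_smul, contractL_X]
      _ = C (M.mulVec ℓ k) := by
          simp only [Matrix.mulVec, dotProduct, map_sum, smul_eq_C_mul, C_mul]
      _ = 0 := by rw [LinearMap.toMatrix'_mulVec, hgℓ, Pi.zero_apply, C_0]
  · have hpderiv : ∀ i, pderiv i φ = ∑ k, M k i • pderiv k φ := fun i => by
      have := LinearMap.congr_fun hgD (Pi.single i 1)
      simp only [LinearMap.comp_apply, contractLFlip_apply, contractL_apply] at this
      simpa [M, LinearMap.toMatrix'_apply, Pi.single_apply] using this.symm
    calc ∑ i, X i * pderiv i φ = ∑ i, ∑ k, M k i • (X i * pderiv k φ) := by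
          refine Finset.sum_congr rfl fun i _ => ?_
          rw [hpderiv i, Finset.mul_sum]
          simp only [mul_smul_comm]
      _ = ∑ k, (∑ i, M k i • X i) * pderiv k φ := by
          rw [Finset.sum_comm]; simp [Finset.sum_mul]

theorem mem_adjoin_Mphi {d : ℕ} {φ : 𝒫} (hφ : φ.IsHomogeneous d) :
    φ ∈ Algebra.adjoin ℂ (Mphi n φ : Set 𝒫) := by
  induction d generalizing φ with
  | zero =>
    rw [totalDegree_eq_zero_iff_eq_C.1 ((totalDegree_zero_iff_isHomogeneous _).2 hφ)]
    exact Subalgebra.algebraMap_mem _ _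
  | succ d ih =>
    obtain ⟨q, hqM, hq⟩ := exists_sum_X_mul_pderiv_eq φ
    have hpderiv : ∀ k, pderiv k φ ∈ Algebra.adjoin ℂ (Mphi n φ : Set 𝒫) := fun k =>
      Algebra.adjoin_mono (Mphi_le_of_Aphi_subset (Aphi_subset_Aphi_pderiv φ k))
        (ih (hφ.pderiv (i := k)))
    have heuler : ((d + 1 : ℕ) : ℂ)⁻¹ • ∑ k, q k * pderiv k φ = φ := by
      rw [← hq, hφ.sum_X_mul_pderiv, ← Nat.cast_smul_eq_nsmul ℂ, smul_smul,
        inv_mul_cancel₀ (Nat.cast_ne_zero.2 d.succ_ne_zero), one_smul]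
    have hmem : ((d + 1 : ℕ) : ℂ)⁻¹ • ∑ k, q k * pderiv k φ ∈
        Algebra.adjoin ℂ (Mphi n φ : Set 𝒫) :=
      Subalgebra.smul_mem _ (Subalgebra.sum_mem _ fun k _ =>
        mul_mem (Algebra.subset_adjoin (hqM k)) (hpderiv k)) _
    rwa [heuler] at hmem

theorem symPowMem_iff_Mphi_le {d : ℕ} {φ : 𝒫} (hφ : φ.IsHomogeneous d) {W : Submodule ℂ 𝒫}
    (hW : W ≤ homogeneousSubmodule (Fin (n + 1)) ℂ 1) : symPowMem n d W φ ↔ Mphi n φ ≤ W :=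
  ⟨fun h => Mphi_le_of_mem_adjoin hW h.1,
    fun h => ⟨Algebra.adjoin_mono h (mem_adjoin_Mphi hφ), hφ⟩⟩

end Contraction

theorem stmt3_general (n d : ℕ) (φ : MvPolynomial (Fin (n + 1)) ℂ)
    (hφ : φ.IsHomogeneous d) :
    (∀ W : Submodule ℂ (MvPolynomial (Fin (n + 1)) ℂ),
      W ≤ homogeneousSubmodule (Fin (n + 1)) ℂ 1 →
        (symPowMem n d W φ ↔ Mphi n φ ≤ W)) ∧
    (∀ M' : Submodule ℂ (MvPolynomial (Fin (n + 1)) ℂ),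
      M' ≤ homogeneousSubmodule (Fin (n + 1)) ℂ 1 →
      (∀ W : Submodule ℂ (MvPolynomial (Fin (n + 1)) ℂ),
        W ≤ homogeneousSubmodule (Fin (n + 1)) ℂ 1 →
          (symPowMem n d W φ ↔ M' ≤ W)) →
      M' = Mphi n φ) := by
  refine ⟨fun W hW => symPowMem_iff_Mphi_le hφ hW, fun M' hM' hM'univ => le_antisymm ?_ ?_⟩
  · exact (hM'univ _ inf_le_left).1 ((symPowMem_iff_Mphi_le hφ inf_le_left).2 le_rfl)
  · exact (symPowMem_iff_Mphi_le hφ hM').1 ((hM'univ M' hM').2 le_rfl)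

/-- `M(φ)` satisfies the universal property (for subspaces `W ⊆ V`):
`φ ∈ Sym^d W ↔ M(φ) ⊆ W`, and it is the unique subspace of `V` with this property. -/
theorem stmt3 (n d : ℕ) (hd : 1 ≤ d) (φ : MvPolynomial (Fin (n + 1)) ℂ)
    (hφ : φ.IsHomogeneous d) :
    (∀ W : Submodule ℂ (MvPolynomial (Fin (n + 1)) ℂ),
      W ≤ homogeneousSubmodule (Fin (n + 1)) ℂ 1 →
        (symPowMem n d W φ ↔ Mphi n φ ≤ W)) ∧
    (∀ M' : Submodule ℂ (MvPolynomial (Fin (n + 1)) ℂ),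
      M' ≤ homogeneousSubmodule (Fin (n + 1)) ℂ 1 →
      (∀ W : Submodule ℂ (MvPolynomial (Fin (n + 1)) ℂ),
        W ≤ homogeneousSubmodule (Fin (n + 1)) ℂ 1 →
          (symPowMem n d W φ ↔ M' ≤ W)) →
      M' = Mphi n φ) :=
  stmt3_general n d φ hφ
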